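/- arXiv:0709.1341 — 2 statements merged into one kernel-verified Lean document; each statement's English description precedes it below -/
import Mathlib

section
/- The lattice L satisfies L = {x + x̃ | x ∈ 𝕀}, i.e., L is the image of the icosian ring 𝕀 under the map φ₊(x) = x + x̃. -/
noncomputable section

open Quaternion Classical

/-- √5 as a real number. -/
def sqrt5 : ℝ := Real.sqrt 5

/-- The golden ratio τ = (1+√5)/2. -/
def gold : ℝ := (1 + sqrt5) / 2

/-- membership in K = ℚ(√5) ⊆ ℝ. -/
def inK (x : ℝ) : Prop := ∃ a b : ℚ, x = (a : ℝ) + (b : ℝ) * sqrt5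

/-- The nontrivial field automorphism of K = ℚ(√5) (√5 ↦ -√5), extended by the
identity outside K.  Since `1, √5` are linearly independent over ℚ, the rational
coordinates of an element of K are unique, so this is well defined. -/
noncomputable def conjK (x : ℝ) : ℝ :=
  if h : ∃ a b : ℚ, x = (a : ℝ) + (b : ℝ) * sqrt5 then
    (h.choose : ℝ) - (h.choose_spec.choose : ℝ) * sqrt5
  else x

/-- membership in 𝔬 = ℤ[τ], the ring of integers of ℚ(√5). -/
def inO (x : ℝ) : Prop := ∃ m n : ℤ, x = (m : ℝ) + (n : ℝ) * gold

/-- The twist map (a,b,c,d) ↦ (a',b',d',c') on quaternions. -/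
noncomputable def twist (q : ℍ[ℝ]) : ℍ[ℝ] :=
  ⟨conjK q.re, conjK q.imI, conjK q.imK, conjK q.imJ⟩

/-- reduced norm nr(q) = q q̄ (as a real number). -/
def nr (q : ℍ[ℝ]) : ℝ := (q * star q).re

/-- reduced trace tr(q) = q + q̄ (as a real number). -/
def trq (q : ℍ[ℝ]) : ℝ := (q + star q).re

/-- generators of the icosian ring. -/
def e₁ : ℍ[ℝ] := ⟨1, 0, 0, 0⟩
def e₂ : ℍ[ℝ] := ⟨0, 1, 0, 0⟩
def e₃ : ℍ[ℝ] := ⟨1/2, 1/2, 1/2, 1/2⟩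
def e₄ : ℍ[ℝ] := ⟨(1 - gold)/2, gold/2, 0, 1/2⟩

/-- membership in the icosian ring 𝕀, the 𝔬-span of the four generators. -/
def inI (q : ℍ[ℝ]) : Prop :=
  ∃ c₁ c₂ c₃ c₄ : ℝ, inO c₁ ∧ inO c₂ ∧ inO c₃ ∧ inO c₄ ∧
    q = c₁ • e₁ + c₂ • e₂ + c₃ • e₃ + c₄ • e₄

/-- generators of the copy L of the root lattice A₄. -/
def g₁ : ℍ[ℝ] := ⟨1, 0, 0, 0⟩
def g₂ : ℍ[ℝ] := ⟨-1/2, 1/2, 1/2, 1/2⟩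
def g₃ : ℍ[ℝ] := ⟨0, -1, 0, 0⟩
def g₄ : ℍ[ℝ] := ⟨0, 1/2, (gold - 1)/2, -gold/2⟩

/-- L, the ℤ-span of the four generators, as an additive subgroup of ℍ(ℝ). -/
def Lgrp : AddSubgroup ℍ[ℝ] := AddSubgroup.closure {g₁, g₂, g₃, g₄}

/-- `q` is a primitive icosian. -/
def PrimitiveIcosian (q : ℍ[ℝ]) : Prop :=
  inI q ∧ ∀ α : ℝ, inK α → inI (α • q) → inO α

/-- `q` is admissible with |q q̃| = n. -/
def Admissible (q : ℍ[ℝ]) (n : ℕ) : Prop :=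
  nr q * conjK (nr q) = (n : ℝ) ^ 2

/-- The additive map x ↦ r • (q x q̃) on ℍ(ℝ). -/
noncomputable def rotHom (q : ℍ[ℝ]) (r : ℝ) : ℍ[ℝ] →+ ℍ[ℝ] where
  toFun x := r • (q * x * twist q)
  map_zero' := by simp
  map_add' x y := by
    simp [mul_add, add_mul, smul_add]

/-- Commensurateness of two additive subgroups of ℍ(ℝ). -/
def Commensurate (A B : AddSubgroup ℍ[ℝ]) : Prop :=
  (A ⊓ B).relIndex A ≠ 0 ∧ (A ⊓ B).relIndex B ≠ 0

/-- Image of an additive subgroup under a linear isometry of ℍ(ℝ) ≅ ℝ⁴. -/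
def mapIso (R : ℍ[ℝ] ≃ₗᵢ[ℝ] ℍ[ℝ]) (A : AddSubgroup ℍ[ℝ]) : AddSubgroup ℍ[ℝ] :=
  A.map (R.toLinearEquiv.toLinearMap.toAddMonoidHom)

/-- `R` lies in SO(4,ℝ). -/
def IsRotation (R : ℍ[ℝ] ≃ₗᵢ[ℝ] ℍ[ℝ]) : Prop :=
  LinearMap.det (R.toLinearEquiv.toLinearMap) = 1

/-!
Write an icosian as `∑ (mᵢ + nᵢ τ) eᵢ` with `mᵢ, nᵢ ∈ ℤ`. Its coordinates have the form
`p + q τ` with `p, q ∈ ℚ`, on which the conjugation acts by `τ ↦ 1 - τ`; hence `x + x̃` is an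
explicit integral combination of the generators `g₁, …, g₄` of `L`, and the integer map
`(mᵢ, nᵢ) ↦ coefficients` is onto `ℤ⁴`.
-/

theorem AddSubgroup.mem_closure_four {G : Type*} [AddCommGroup G] {a b c d x : G} :
    x ∈ AddSubgroup.closure {a, b, c, d} ↔
      ∃ k₁ k₂ k₃ k₄ : ℤ, k₁ • a + k₂ • b + k₃ • c + k₄ • d = x := by
  rw [← Submodule.span_int_eq_addSubgroupClosure, Submodule.mem_toAddSubgroup]
  simp only [Submodule.mem_span_insert, Submodule.mem_span_singleton]
  constructor
  · rintro ⟨k₁, _, ⟨k₂, _, ⟨k₃, _, ⟨k₄, rfl⟩, rfl⟩, rfl⟩, rfl⟩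
    exact ⟨k₁, k₂, k₃, k₄, by abel⟩
  · rintro ⟨k₁, k₂, k₃, k₄, rfl⟩
    exact ⟨k₁, _, ⟨k₂, _, ⟨k₃, _, ⟨k₄, rfl⟩, rfl⟩, rfl⟩, by abel⟩

lemma irrational_sqrt5 : Irrational sqrt5 := by
  simpa [sqrt5] using Nat.prime_five.irrational_sqrt

lemma sqrt5_mul_self : sqrt5 * sqrt5 = 5 := Real.mul_self_sqrt (by norm_num)

lemma gold_mul_self : gold * gold = gold + 1 := by
  unfold gold; linear_combination (1 / 4 : ℝ) * sqrt5_mul_self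

lemma rat_add_rat_mul_sqrt5_inj {a b c d : ℚ} (h : (a : ℝ) + b * sqrt5 = c + d * sqrt5) :
    a = c ∧ b = d := by
  obtain rfl | hbd := eq_or_ne b d
  · exact ⟨by exact_mod_cast add_right_cancel h, rfl⟩
  · have hirr := (irrational_sqrt5.ratCast_mul (sub_ne_zero.2 hbd)).ratCast_add (q := a - c)
    exact absurd (by push_cast; linarith) hirr.ne_zero

lemma conjK_rat_add_rat_mul_sqrt5 (a b : ℚ) :
    conjK (a + b * sqrt5) = a - b * sqrt5 := by
  have h : ∃ a' b' : ℚ, (a : ℝ) + b * sqrt5 = a' + b' * sqrt5 := ⟨a, b, rfl⟩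
  obtain ⟨ha, hb⟩ := rat_add_rat_mul_sqrt5_inj h.choose_spec.choose_spec
  have ha' : (h.choose : ℝ) = a := congrArg _ ha.symm
  have hb' : (h.choose_spec.choose : ℝ) = b := congrArg _ hb.symm
  rw [conjK, dif_pos h]
  linear_combination ha' - sqrt5 * hb'

lemma conjK_rat_add_rat_mul_gold (p q : ℚ) :
    conjK (p + q * gold) = p + q - q * gold := by
  have h : (p : ℝ) + q * gold = ((p + q / 2 : ℚ) : ℝ) + ((q / 2 : ℚ) : ℝ) * sqrt5 := by
    push_cast; unfold gold; ring
  rw [h, conjK_rat_add_rat_mul_sqrt5]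
  push_cast; unfold gold; ring

@[simp] lemma twist_re (q : ℍ[ℝ]) : (twist q).re = conjK q.re := rfl
@[simp] lemma twist_imI (q : ℍ[ℝ]) : (twist q).imI = conjK q.imI := rfl
@[simp] lemma twist_imJ (q : ℍ[ℝ]) : (twist q).imJ = conjK q.imK := rfl
@[simp] lemma twist_imK (q : ℍ[ℝ]) : (twist q).imK = conjK q.imJ := rfl

def icosianOfCoeffs (m₁ n₁ m₂ n₂ m₃ n₃ m₄ n₄ : ℤ) : ℍ[ℝ] :=
  (m₁ + n₁ * gold) • e₁ + (m₂ + n₂ * gold) • e₂ + (m₃ + n₃ * gold) • e₃ + (m₄ + n₄ * gold) • e₄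

lemma inI_iff_exists_icosianOfCoeffs {x : ℍ[ℝ]} :
    inI x ↔ ∃ m₁ n₁ m₂ n₂ m₃ n₃ m₄ n₄ : ℤ, x = icosianOfCoeffs m₁ n₁ m₂ n₂ m₃ n₃ m₄ n₄ := by
  constructor
  · rintro ⟨_, _, _, _, ⟨m₁, n₁, rfl⟩, ⟨m₂, n₂, rfl⟩, ⟨m₃, n₃, rfl⟩, ⟨m₄, n₄, rfl⟩, rfl⟩
    exact ⟨m₁, n₁, m₂, n₂, m₃, n₃, m₄, n₄, rfl⟩
  · rintro ⟨m₁, n₁, m₂, n₂, m₃, n₃, m₄, n₄, rfl⟩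
    exact ⟨_, _, _, _, ⟨m₁, n₁, rfl⟩, ⟨m₂, n₂, rfl⟩, ⟨m₃, n₃, rfl⟩, ⟨m₄, n₄, rfl⟩, rfl⟩

lemma icosianOfCoeffs_eq_mk (m₁ n₁ m₂ n₂ m₃ n₃ m₄ n₄ : ℤ) :
    icosianOfCoeffs m₁ n₁ m₂ n₂ m₃ n₃ m₄ n₄ =
      ⟨((m₁ + m₃ / 2 + (m₄ - n₄) / 2 : ℚ) : ℝ) + ((n₁ + n₃ / 2 - m₄ / 2 : ℚ) : ℝ) * gold,
        ((m₂ + m₃ / 2 + n₄ / 2 : ℚ) : ℝ) + ((n₂ + n₃ / 2 + (m₄ + n₄) / 2 : ℚ) : ℝ) * gold,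
        ((m₃ / 2 : ℚ) : ℝ) + ((n₃ / 2 : ℚ) : ℝ) * gold,
        (((m₃ + m₄) / 2 : ℚ) : ℝ) + (((n₃ + n₄) / 2 : ℚ) : ℝ) * gold⟩ := by
  ext <;> simp only [icosianOfCoeffs, Quaternion.re_add, Quaternion.imI_add, Quaternion.imJ_add,
    Quaternion.imK_add, Quaternion.re_smul, Quaternion.imI_smul, Quaternion.imJ_smul,
    Quaternion.imK_smul, smul_eq_mul] <;> simp only [e₁, e₂, e₃, e₄] <;> push_cast
  · linear_combination (-(n₄ : ℝ) / 2) * gold_mul_self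
  · linear_combination ((n₄ : ℝ) / 2) * gold_mul_self
  · ring
  · ring

lemma icosianOfCoeffs_add_twist (m₁ n₁ m₂ n₂ m₃ n₃ m₄ n₄ : ℤ) :
    icosianOfCoeffs m₁ n₁ m₂ n₂ m₃ n₃ m₄ n₄ + twist (icosianOfCoeffs m₁ n₁ m₂ n₂ m₃ n₃ m₄ n₄) =
      (2 * m₁ + n₁ + 2 * m₃ + n₃ + m₄ - n₄) • g₁ + (2 * m₃ + n₃ + m₄) • g₂ +
        (-2 * m₂ - n₂ - 2 * n₄) • g₃ + (-n₄) • g₄ := by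
  ext <;> simp only [← Int.cast_smul_eq_zsmul ℝ, Quaternion.re_add, Quaternion.imI_add,
    Quaternion.imJ_add, Quaternion.imK_add, Quaternion.re_smul, Quaternion.imI_smul,
    Quaternion.imJ_smul, Quaternion.imK_smul, smul_eq_mul, twist_re, twist_imI, twist_imJ,
    twist_imK] <;>
    simp only [icosianOfCoeffs_eq_mk, conjK_rat_add_rat_mul_gold, g₁, g₂, g₃, g₄] <;>
    push_cast <;> ring

lemma mem_Lgrp_iff {q : ℍ[ℝ]} :
    q ∈ Lgrp ↔ ∃ a₁ a₂ a₃ a₄ : ℤ, a₁ • g₁ + a₂ • g₂ + a₃ • g₃ + a₄ • g₄ = q :=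
  AddSubgroup.mem_closure_four

theorem L_eq_phiPlus_of_icosians :
    ∀ q : ℍ[ℝ], q ∈ Lgrp ↔ ∃ x : ℍ[ℝ], inI x ∧ q = x + twist x := by
  intro q
  simp only [mem_Lgrp_iff, inI_iff_exists_icosianOfCoeffs]
  constructor
  · rintro ⟨a₁, a₂, a₃, a₄, rfl⟩
    -- with `m₁ = m₂ = m₃ = n₃ = 0` the coefficient map of `icosianOfCoeffs_add_twist` is triangular
    refine ⟨_, ⟨0, a₁ - a₂ - a₄, 0, -a₃ + 2 * a₄, 0, 0, a₂, -a₄, rfl⟩, ?_⟩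
    rw [icosianOfCoeffs_add_twist]
    module
  · rintro ⟨_, ⟨m₁, n₁, m₂, n₂, m₃, n₃, m₄, n₄, rfl⟩, rfl⟩
    exact ⟨_, _, _, _, (icosianOfCoeffs_add_twist ..).symm⟩

end
end

section
/- Let q ∈ 𝕀 and γ ∈ K. Then q ∈ γ𝕀 if and only if tr(qȳ) ∈ γ𝔬 for all y ∈ 𝕀. -/
noncomputable section

open Quaternion Classical

/-!
The trace form `(x, y) ↦ tr(x ȳ)` takes values in `𝔬` on `𝕀`, and its Gram matrix `G` on the
generators `e₁, …, e₄` is invertible over `𝔬`: `G⁻¹` has entries in `ℤ[τ]`. Writing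
`q = ∑ cᵢ eᵢ`, the traces `tᵢ = tr(q ēᵢ)` satisfy `c G = t`, so `c = t G⁻¹`; if every `tᵢ` lies
in `γ𝔬`, then so does every `cᵢ`.
-/

open Matrix

lemma gold_sq : gold ^ 2 = gold + 1 := by
  have h5 : sqrt5 ^ 2 = 5 := Real.sq_sqrt (by norm_num)
  unfold gold
  linear_combination h5 / 4

lemma trq_eq_two_mul_re (q : ℍ[ℝ]) : trq q = 2 * q.re := by
  simp [trq, two_mul]

lemma trq_mul_star (a b : ℍ[ℝ]) :
    trq (a * star b) = 2 * (a.re * b.re + a.imI * b.imI + a.imJ * b.imJ + a.imK * b.imK) := by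
  simp [trq_eq_two_mul_re]

section TraceForm

variable {ι : Type*} [Fintype ι]

lemma trq_sum_smul (c : ι → ℝ) (x : ι → ℍ[ℝ]) :
    trq (∑ i, c i • x i) = ∑ i, c i * trq (x i) := by
  have h : (∑ i, c i • x i).re = ∑ i, c i * (x i).re :=
    map_sum (QuaternionAlgebra.reₗ (-1) 0 (-1)) (fun i => c i • x i) Finset.univ
  simp only [trq_eq_two_mul_re, h, Finset.mul_sum, mul_left_comm]

lemma trq_sum_smul_mul (c : ι → ℝ) (v : ι → ℍ[ℝ]) (y : ℍ[ℝ]) :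
    trq ((∑ i, c i • v i) * y) = ∑ i, c i * trq (v i * y) := by
  simp only [Finset.sum_mul, smul_mul_assoc, trq_sum_smul]

lemma trq_mul_star_sum_smul (x : ℍ[ℝ]) (d : ι → ℝ) (v : ι → ℍ[ℝ]) :
    trq (x * star (∑ j, d j • v j)) = ∑ j, d j * trq (x * star (v j)) := by
  simp only [star_sum, Quaternion.star_smul, Finset.mul_sum, mul_smul_comm, trq_sum_smul]

end TraceForm

namespace Matrix

variable {n R : Type*} [Fintype n]

lemma vecMul_apply_mem [Semiring R] {σ : Type*} [SetLike σ R] [SubsemiringClass σ R]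
    {S : σ} {d : n → R} {H : Matrix n n R} (hd : ∀ j, d j ∈ S) (hH : ∀ i j, H i j ∈ S) (i : n) :
    (d ᵥ* H) i ∈ S :=
  sum_mem fun j _ => mul_mem (hd j) (hH j i)

lemma eq_smul_vecMul_of_vecMul_eq_smul [DecidableEq n] [CommSemiring R] {G H : Matrix n n R}
    (hGH : G * H = 1) {c d : n → R} {γ : R} (h : c ᵥ* G = γ • d) : c = γ • (d ᵥ* H) := by
  calc c = c ᵥ* (G * H) := by rw [hGH, vecMul_one]
    _ = γ • (d ᵥ* H) := by rw [← vecMul_vecMul, h, smul_vecMul]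

end Matrix

def goldenIntegers : Subring ℝ where
  carrier := {x | inO x}
  one_mem' := ⟨1, 0, by simp⟩
  zero_mem' := ⟨0, 0, by simp⟩
  add_mem' := by
    rintro _ _ ⟨m, n, rfl⟩ ⟨m', n', rfl⟩
    exact ⟨m + m', n + n', by push_cast; ring⟩
  neg_mem' := by
    rintro _ ⟨m, n, rfl⟩
    exact ⟨-m, -n, by push_cast; ring⟩
  mul_mem' := by
    rintro _ _ ⟨m, n, rfl⟩ ⟨m', n', rfl⟩
    refine ⟨m * m' + n * n', m * n' + m' * n + n * n', ?_⟩
    push_cast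
    linear_combination ((n : ℝ) * n') * gold_sq

lemma gold_mem_goldenIntegers : gold ∈ goldenIntegers := ⟨0, 1, by simp⟩

def icosianGen : Fin 4 → ℍ[ℝ] := ![e₁, e₂, e₃, e₄]

lemma inI_iff_exists_sum {q : ℍ[ℝ]} :
    inI q ↔ ∃ c : Fin 4 → ℝ, (∀ i, c i ∈ goldenIntegers) ∧ q = ∑ i, c i • icosianGen i := by
  constructor
  · rintro ⟨c₁, c₂, c₃, c₄, h₁, h₂, h₃, h₄, rfl⟩
    refine ⟨![c₁, c₂, c₃, c₄], fun i => ?_, by simp [Fin.sum_univ_four, icosianGen]⟩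
    fin_cases i <;> assumption
  · rintro ⟨c, hc, rfl⟩
    exact ⟨c 0, c 1, c 2, c 3, hc 0, hc 1, hc 2, hc 3, by simp [Fin.sum_univ_four, icosianGen]⟩

lemma inI_icosianGen (i : Fin 4) : inI (icosianGen i) := by
  refine inI_iff_exists_sum.2 ⟨Pi.single i 1, fun j => ?_, by simp⟩
  by_cases h : j = i <;> simp [h, one_mem, zero_mem]

def icosianGram : Matrix (Fin 4) (Fin 4) ℝ :=
  !![2, 0, 1, 1 - gold;
     0, 2, 1, gold;
     1, 1, 2, 1;
     1 - gold, gold, 1, 2]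

lemma icosianGram_mem (i j : Fin 4) : icosianGram i j ∈ goldenIntegers := by
  fin_cases i <;> fin_cases j <;>
    simp [icosianGram, gold_mem_goldenIntegers, sub_mem, ofNat_mem, one_mem, zero_mem]

def icosianGramInv : Matrix (Fin 4) (Fin 4) ℝ :=
  !![2, -1, -gold, 2 * gold - 1;
     -1, 2, gold - 1, 1 - 2 * gold;
     -gold, gold - 1, 2, -2;
     2 * gold - 1, 1 - 2 * gold, -2, 4]

lemma trq_icosianGen_mul_star (i j : Fin 4) :
    trq (icosianGen i * star (icosianGen j)) = icosianGram i j := by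
  fin_cases i <;> fin_cases j <;>
    rw [trq_mul_star] <;> simp [icosianGen, icosianGram, e₁, e₂, e₃, e₄] <;> grind [gold_sq]

lemma icosianGram_mul_icosianGramInv : icosianGram * icosianGramInv = 1 := by
  ext i j
  fin_cases i <;> fin_cases j <;>
    simp [icosianGram, icosianGramInv, mul_apply, Fin.sum_univ_four] <;> grind [gold_sq]

lemma icosianGramInv_mem (i j : Fin 4) : icosianGramInv i j ∈ goldenIntegers := by
  fin_cases i <;> fin_cases j <;>
    simp [icosianGramInv, gold_mem_goldenIntegers, sub_mem, mul_mem, ofNat_mem, one_mem]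

lemma trq_mul_star_mem_of_inI {x y : ℍ[ℝ]} (hx : inI x) (hy : inI y) :
    trq (x * star y) ∈ goldenIntegers := by
  obtain ⟨c, hc, rfl⟩ := inI_iff_exists_sum.1 hx
  obtain ⟨d, hd, rfl⟩ := inI_iff_exists_sum.1 hy
  simp only [trq_sum_smul_mul, trq_mul_star_sum_smul, trq_icosianGen_mul_star]
  exact sum_mem fun j _ => mul_mem (hd j) <| sum_mem fun i _ => mul_mem (hc i) (icosianGram_mem i j)

lemma exists_inI_eq_smul_of_trq_mul_star_icosianGen {q : ℍ[ℝ]} {γ : ℝ} (hq : inI q)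
    (h : ∀ j, ∃ d ∈ goldenIntegers, trq (q * star (icosianGen j)) = γ * d) :
    ∃ x, inI x ∧ q = γ • x := by
  obtain ⟨c, -, rfl⟩ := inI_iff_exists_sum.1 hq
  choose d hd htr using h
  have hcG : c ᵥ* icosianGram = γ • d := funext fun j => by
    simpa [vecMul, dotProduct, trq_sum_smul_mul, trq_icosianGen_mul_star] using htr j
  have hc := eq_smul_vecMul_of_vecMul_eq_smul icosianGram_mul_icosianGramInv hcG
  refine ⟨∑ i, (d ᵥ* icosianGramInv) i • icosianGen i,
    inI_iff_exists_sum.2 ⟨_, vecMul_apply_mem hd icosianGramInv_mem, rfl⟩, ?_⟩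
  simp [Finset.smul_sum, smul_smul, hc]

theorem mem_smul_icosians_iff_trace_general (q : ℍ[ℝ]) (γ : ℝ) (hq : inI q) :
    (∃ x : ℍ[ℝ], inI x ∧ q = γ • x) ↔
      (∀ y : ℍ[ℝ], inI y → ∃ c : ℝ, inO c ∧ trq (q * star y) = γ * c) := by
  constructor
  · rintro ⟨x, hx, rfl⟩ y hy
    exact ⟨_, trq_mul_star_mem_of_inI hx hy, by simp [trq_eq_two_mul_re, mul_left_comm]⟩
  · intro h
    exact exists_inI_eq_smul_of_trq_mul_star_icosianGen hq fun j => h _ (inI_icosianGen j)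

theorem mem_smul_icosians_iff_trace (q : ℍ[ℝ]) (γ : ℝ) (hq : inI q) (hγ : inK γ) :
    (∃ x : ℍ[ℝ], inI x ∧ q = γ • x) ↔
      (∀ y : ℍ[ℝ], inI y → ∃ c : ℝ, inO c ∧ trq (q * star y) = γ * c) :=
  mem_smul_icosians_iff_trace_general q γ hq
end
end
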